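/- Let k(t,s)=𝔎(t−s), where 𝔎:(0,∞)→ℝ is continuous and satisfies |𝔎(t)|≤M t^{β−1} e^{γt} for all t>0, for some constants M,γ≥0 and β∈(0,1]. Then for every n∈ℕ and every σ>γ, the Laplace transform of c_n satisfies ∫_0^∞ e^{−σt} c_n(t) dt = (1/σ)·[(ℒ𝔎)(σ)]^n, and for every λ≥0 and every σ > γ + (MΓ(β)λ)^{1/β}, the Laplace transform of Φ(·,−λ) exists and equals ∫_0^∞ e^{−σt} Φ(t,−λ) dt = (1/σ)·1/(1+λ(ℒ𝔎)(σ)). -/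

import Mathlib

open MeasureTheory Filter

noncomputable section

noncomputable def coeff (k : ℝ → ℝ → ℝ) : ℕ → ℝ → ℝ
  | 0, _ => 1
  | n + 1, t => if 0 < t then ∫ s in Set.Ioc (0:ℝ) t, k t s * coeff k n s else 0

noncomputable def Phi (k : ℝ → ℝ → ℝ) (t : ℝ) (l : ℂ) : ℂ :=
  ∑' n : ℕ, (coeff k n t : ℂ) * l ^ n

noncomputable def PhiR (k : ℝ → ℝ → ℝ) (t : ℝ) (x : ℝ) : ℝ :=
  ∑' n : ℕ, coeff k n t * x ^ n


open Set Real
open scoped Convolution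

/-! Extend `e^{-σt} c_n(t)` by zero to `t ≤ 0`. Since `e^{-σt} = e^{-σs} e^{-σ(t-s)}`, the Volterra
recursion `c_{n+1}(t) = ∫_0^t 𝔎(t-s) c_n(s) ds` turns into `g_{n+1} = g_n ⋆ f` on all of `ℝ`, where
`f` is the damped kernel `e^{-σt} 𝔎(t)` extended by zero. Fubini for convolutions gives
`∫ g_n = (∫ g_0) (∫ f)^n` with `∫ g_0 = 1/σ`, and the same argument on absolute values gives
`∫ |g_n| ≤ σ⁻¹ (∫ |f|)^n`, where `∫ |f| ≤ M Γ(β) (σ-γ)^{-β}` by the growth bound on `𝔎`. For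
`σ > γ + (M Γ(β) λ)^{1/β}` this makes `λ ∫ |f| < 1`, so `Φ(·,-λ)` may be integrated term by term
against `e^{-σt}`, which leaves a geometric series. -/

section IteratedConvolution

variable {G : Type*} [AddGroup G] [MeasurableSpace G] {μ : Measure G}

theorem norm_convolution_mul_le (f g : G → ℝ) (x : G) :
    ‖(f ⋆[ContinuousLinearMap.mul ℝ ℝ, μ] g) x‖ ≤
      ((fun y => ‖f y‖) ⋆[ContinuousLinearMap.mul ℝ ℝ, μ] fun y => ‖g y‖) x := by
  simp only [convolution_def, ContinuousLinearMap.mul_apply', ← norm_mul]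
  exact norm_integral_le_integral_norm _

variable [MeasurableAdd₂ G] [MeasurableNeg G] [SFinite μ] [μ.IsAddRightInvariant]
  {f g : G → ℝ}

theorem MeasureTheory.Integrable.iterate_convolution_mul (hg : Integrable g μ)
    (hf : Integrable f μ) (n : ℕ) :
    Integrable ((· ⋆[ContinuousLinearMap.mul ℝ ℝ, μ] f)^[n] g) μ := by
  induction n with
  | zero => exact hg
  | succ n ih =>
    rw [Function.iterate_succ_apply']
    exact ih.integrable_convolution _ hf

theorem integral_iterate_convolution_mul (hg : Integrable g μ) (hf : Integrable f μ) (n : ℕ) :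
    ∫ x, (· ⋆[ContinuousLinearMap.mul ℝ ℝ, μ] f)^[n] g x ∂μ =
      (∫ x, g x ∂μ) * (∫ x, f x ∂μ) ^ n := by
  induction n with
  | zero => simp
  | succ n ih =>
    rw [Function.iterate_succ_apply', integral_convolution _ (hg.iterate_convolution_mul hf n)
      hf, ContinuousLinearMap.mul_apply', ih, pow_succ, mul_assoc]

theorem integral_norm_iterate_convolution_mul_le (hg : Integrable g μ) (hf : Integrable f μ)
    (n : ℕ) :
    ∫ x, ‖(· ⋆[ContinuousLinearMap.mul ℝ ℝ, μ] f)^[n] g x‖ ∂μ ≤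
      (∫ x, ‖g x‖ ∂μ) * (∫ x, ‖f x‖ ∂μ) ^ n := by
  induction n with
  | zero => simp
  | succ n ih =>
    set h := (· ⋆[ContinuousLinearMap.mul ℝ ℝ, μ] f)^[n] g
    have hh : Integrable h μ := hg.iterate_convolution_mul hf n
    calc ∫ x, ‖(· ⋆[ContinuousLinearMap.mul ℝ ℝ, μ] f)^[n + 1] g x‖ ∂μ
        = ∫ x, ‖(h ⋆[ContinuousLinearMap.mul ℝ ℝ, μ] f) x‖ ∂μ := by
          rw [Function.iterate_succ_apply']
      _ ≤ ∫ x, ((fun y => ‖h y‖) ⋆[ContinuousLinearMap.mul ℝ ℝ, μ] fun y => ‖f y‖) x ∂μ :=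
          integral_mono (hh.integrable_convolution _ hf).norm
            (hh.norm.integrable_convolution _ hf.norm) (norm_convolution_mul_le h f)
      _ = (∫ x, ‖h x‖ ∂μ) * ∫ x, ‖f x‖ ∂μ := by
          rw [integral_convolution _ hh.norm hf.norm, ContinuousLinearMap.mul_apply']
      _ ≤ (∫ x, ‖g x‖ ∂μ) * (∫ x, ‖f x‖ ∂μ) ^ (n + 1) := by
          rw [pow_succ, ← mul_assoc]
          exact mul_le_mul_of_nonneg_right ih (integral_nonneg fun _ => norm_nonneg _)

end IteratedConvolution

theorem MeasureTheory.integrable_tsum_of_summable_integral_norm {α E ι : Type*}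
    [MeasurableSpace α] {μ : Measure α} [NormedAddCommGroup E] [CompleteSpace E] [Countable ι]
    {F : ι → α → E} (hF_int : ∀ i, Integrable (F i) μ)
    (hF_sum : Summable fun i => ∫ a, ‖F i a‖ ∂μ) :
    Integrable (fun a => ∑' i, F i a) μ := by
  set u : ι → α →₁[μ] E := fun i => (hF_int i).toL1 (F i)
  have hu : ∑' i, ‖u i‖ₑ ≠ ⊤ := by
    simp only [u, Integrable.enorm_toL1, ← ofReal_integral_norm_eq_lintegral_enorm (hF_int _)]
    rw [← ENNReal.ofReal_tsum_of_nonneg (fun i => integral_nonneg fun _ => norm_nonneg _) hF_sum]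
    exact ENNReal.ofReal_ne_top
  refine (L1.integrable_coeFn (∑' i, u i)).congr ?_
  filter_upwards [Lp.coeFn_tsum hu, ae_all_iff.2 fun i => (hF_int i).coeFn_toL1] with a h1 h2
  rw [h1]
  exact tsum_congr h2

section LaplaceIntegrand

def laplaceIntegrand (σ : ℝ) (f : ℝ → ℝ) : ℝ → ℝ :=
  (Ioi 0).indicator fun t => exp (-(σ * t)) * f t

variable {σ : ℝ} {f : ℝ → ℝ}

theorem integrable_laplaceIntegrand_iff :
    Integrable (laplaceIntegrand σ f) ↔ IntegrableOn (fun t => exp (-(σ * t)) * f t) (Ioi 0) :=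
  integrable_indicator_iff measurableSet_Ioi

theorem integral_laplaceIntegrand :
    ∫ t, laplaceIntegrand σ f t = ∫ t in Ioi 0, exp (-(σ * t)) * f t :=
  integral_indicator measurableSet_Ioi

theorem integral_norm_laplaceIntegrand_one :
    ∫ t, ‖laplaceIntegrand σ (fun _ => 1) t‖ = ∫ t, laplaceIntegrand σ (fun _ => 1) t := by
  congr 1 with t
  exact norm_of_nonneg (indicator_nonneg (fun t _ => by positivity) t)

theorem integrable_laplaceIntegrand_one (hσ : 0 < σ) :
    Integrable (laplaceIntegrand σ fun _ => 1) := by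
  rw [integrable_laplaceIntegrand_iff]
  simpa using exp_neg_integrableOn_Ioi 0 hσ

theorem integral_laplaceIntegrand_one (hσ : 0 < σ) :
    ∫ t, laplaceIntegrand σ (fun _ => 1) t = 1 / σ := by
  simpa [integral_laplaceIntegrand] using integral_rpow_mul_exp_neg_mul_Ioi one_pos hσ

theorem integrable_laplaceIntegrand_rpow {M a : ℝ} (ha : 0 < a) (hσ : 0 < σ) :
    Integrable (laplaceIntegrand σ fun t => M * t ^ (a - 1)) := by
  rw [integrable_laplaceIntegrand_iff]
  have h : IntegrableOn (fun t : ℝ => M * (t ^ (a - 1) * exp (-σ * t ^ (1 : ℝ)))) (Ioi 0) :=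
    (integrableOn_rpow_mul_exp_neg_mul_rpow (by linarith) one_pos hσ).const_mul M
  refine h.congr_fun (fun t _ => ?_) measurableSet_Ioi
  simp only [rpow_one, neg_mul]
  ring

theorem integral_laplaceIntegrand_rpow {M a : ℝ} (ha : 0 < a) (hσ : 0 < σ) :
    ∫ t, laplaceIntegrand σ (fun t => M * t ^ (a - 1)) t = M * Gamma a * σ ^ (-a) := by
  have h := integral_rpow_mul_exp_neg_mul_Ioi ha hσ
  rw [one_div, inv_rpow hσ.le, ← rpow_neg hσ.le] at h
  rw [integral_laplaceIntegrand, ← setIntegral_congr_fun measurableSet_Ioi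
    (fun t _ => by ring : EqOn (fun t => M * (t ^ (a - 1) * exp (-(σ * t)))) _ _),
    integral_const_mul, h]
  ring

end LaplaceIntegrand

section Volterra

variable {σ : ℝ}

theorem laplaceIntegrand_mul_laplaceIntegrand_sub (f g : ℝ → ℝ) (t s : ℝ) :
    laplaceIntegrand σ f s * laplaceIntegrand σ g (t - s) =
      (Ioo 0 t).indicator (fun s => exp (-(σ * t)) * (g (t - s) * f s)) s := by
  by_cases hs : 0 < s <;> by_cases hts : s < t
  · have hexp : exp (-(σ * s)) * exp (-(σ * (t - s))) = exp (-(σ * t)) := by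
      rw [← exp_add]; ring_nf
    simp only [laplaceIntegrand, indicator_of_mem (show s ∈ Ioo 0 t from ⟨hs, hts⟩),
      indicator_of_mem (show t - s ∈ Ioi 0 from sub_pos.2 hts), indicator_of_mem (mem_Ioi.2 hs),
      ← hexp]
    ring
  all_goals
    simp_all [laplaceIntegrand, not_lt.1]

variable {K : ℝ → ℝ} {k : ℝ → ℝ → ℝ}

theorem laplaceIntegrand_coeff_succ (hk : ∀ t s, k t s = K (t - s)) (n : ℕ) :
    laplaceIntegrand σ (coeff k (n + 1)) =
      laplaceIntegrand σ (coeff k n) ⋆[ContinuousLinearMap.mul ℝ ℝ] laplaceIntegrand σ K := by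
  ext t
  simp only [convolution_def, ContinuousLinearMap.mul_apply',
    laplaceIntegrand_mul_laplaceIntegrand_sub, ← hk]
  rw [integral_indicator measurableSet_Ioo, integral_const_mul, ← integral_Ioc_eq_integral_Ioo]
  by_cases ht : 0 < t
  · simp [laplaceIntegrand, coeff, ht]
  · simp [laplaceIntegrand, coeff, ht, Ioc_eq_empty]

theorem laplaceIntegrand_coeff (hk : ∀ t s, k t s = K (t - s)) (n : ℕ) :
    laplaceIntegrand σ (coeff k n) =
      (· ⋆[ContinuousLinearMap.mul ℝ ℝ] laplaceIntegrand σ K)^[n]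
        (laplaceIntegrand σ fun _ => 1) := by
  induction n with
  | zero => rfl
  | succ n ih => rw [laplaceIntegrand_coeff_succ hk, ih, Function.iterate_succ_apply']

theorem integrable_laplaceIntegrand_coeff (hk : ∀ t s, k t s = K (t - s))
    (hK : Integrable (laplaceIntegrand σ K)) (hσ : 0 < σ) (n : ℕ) :
    Integrable (laplaceIntegrand σ (coeff k n)) := by
  rw [laplaceIntegrand_coeff hk]
  exact (integrable_laplaceIntegrand_one hσ).iterate_convolution_mul hK n

theorem integral_laplaceIntegrand_coeff (hk : ∀ t s, k t s = K (t - s))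
    (hK : Integrable (laplaceIntegrand σ K)) (hσ : 0 < σ) (n : ℕ) :
    ∫ t, laplaceIntegrand σ (coeff k n) t = 1 / σ * (∫ t, laplaceIntegrand σ K t) ^ n := by
  rw [laplaceIntegrand_coeff hk,
    integral_iterate_convolution_mul (integrable_laplaceIntegrand_one hσ) hK,
    integral_laplaceIntegrand_one hσ]

theorem integral_norm_laplaceIntegrand_coeff_le (hk : ∀ t s, k t s = K (t - s))
    (hK : Integrable (laplaceIntegrand σ K)) (hσ : 0 < σ) (n : ℕ) :
    ∫ t, ‖laplaceIntegrand σ (coeff k n) t‖ ≤ 1 / σ * (∫ t, ‖laplaceIntegrand σ K t‖) ^ n := by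
  rw [laplaceIntegrand_coeff hk, ← integral_laplaceIntegrand_one hσ,
    ← integral_norm_laplaceIntegrand_one]
  exact integral_norm_iterate_convolution_mul_le (integrable_laplaceIntegrand_one hσ) hK n

end Volterra

section KernelBound

variable {K : ℝ → ℝ} {M γ β σ : ℝ}

theorem norm_laplaceIntegrand_le_of_abs_le
    (hKb : ∀ t : ℝ, 0 < t → |K t| ≤ M * t ^ (β - 1) * exp (γ * t)) (t : ℝ) :
    ‖laplaceIntegrand σ K t‖ ≤ laplaceIntegrand (σ - γ) (fun t => M * t ^ (β - 1)) t := by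
  by_cases ht : 0 < t
  · have hexp : exp (-(σ * t)) * exp (γ * t) = exp (-((σ - γ) * t)) := by
      rw [← exp_add]; ring_nf
    simp only [laplaceIntegrand, indicator_of_mem (mem_Ioi.2 ht), norm_mul, norm_eq_abs,
      abs_exp]
    calc exp (-(σ * t)) * |K t| ≤ exp (-(σ * t)) * (M * t ^ (β - 1) * exp (γ * t)) := by
          gcongr; exact hKb t ht
      _ = exp (-((σ - γ) * t)) * (M * t ^ (β - 1)) := by rw [← hexp]; ring
  · simp [laplaceIntegrand, ht]

theorem integrable_laplaceIntegrand_of_abs_le (hKc : ContinuousOn K (Ioi 0)) (hβ : 0 < β)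
    (hKb : ∀ t : ℝ, 0 < t → |K t| ≤ M * t ^ (β - 1) * exp (γ * t)) (hσ : γ < σ) :
    Integrable (laplaceIntegrand σ K) := by
  refine (integrable_laplaceIntegrand_rpow hβ (sub_pos.2 hσ)).mono' ?_
    (.of_forall (norm_laplaceIntegrand_le_of_abs_le hKb))
  refine (aestronglyMeasurable_indicator_iff measurableSet_Ioi).2 ?_
  exact ((continuous_exp.comp (continuous_const.mul continuous_id).neg).continuousOn.mul
    hKc).aestronglyMeasurable measurableSet_Ioi

theorem integral_norm_laplaceIntegrand_le_of_abs_le (hβ : 0 < β)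
    (hKb : ∀ t : ℝ, 0 < t → |K t| ≤ M * t ^ (β - 1) * exp (γ * t)) (hσ : γ < σ) :
    ∫ t, ‖laplaceIntegrand σ K t‖ ≤ M * Gamma β * (σ - γ) ^ (-β) := by
  rw [← integral_laplaceIntegrand_rpow hβ (sub_pos.2 hσ)]
  exact integral_mono_of_nonneg (.of_forall fun _ => norm_nonneg _)
    (integrable_laplaceIntegrand_rpow hβ (sub_pos.2 hσ))
    (.of_forall (norm_laplaceIntegrand_le_of_abs_le hKb))

end KernelBound

theorem laplaceIntegrand_PhiR (k : ℝ → ℝ → ℝ) (σ x : ℝ) :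
    laplaceIntegrand σ (fun t => PhiR k t x) =
      fun t => ∑' n, laplaceIntegrand σ (coeff k n) t * x ^ n := by
  ext t
  by_cases ht : 0 < t
  · simp only [laplaceIntegrand, indicator_of_mem (mem_Ioi.2 ht), PhiR, ← tsum_mul_left]
    exact tsum_congr fun n => by ring
  · simp [laplaceIntegrand, ht]

theorem integrable_and_integral_laplaceIntegrand_PhiR {k : ℝ → ℝ → ℝ} {σ x L N : ℝ}
    (hint : ∀ n, Integrable (laplaceIntegrand σ (coeff k n)))
    (hval : ∀ n, ∫ t, laplaceIntegrand σ (coeff k n) t = 1 / σ * L ^ n)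
    (hnorm : ∀ n, ∫ t, ‖laplaceIntegrand σ (coeff k n) t‖ ≤ 1 / σ * N ^ n)
    (hL : ‖L‖ ≤ N) (hx : ‖x‖ * N < 1) :
    Integrable (laplaceIntegrand σ fun t => PhiR k t x) ∧
      ∫ t, laplaceIntegrand σ (fun t => PhiR k t x) t = 1 / σ * (1 - x * L)⁻¹ := by
  set F : ℕ → ℝ → ℝ := fun n t => laplaceIntegrand σ (coeff k n) t * x ^ n
  have hF_int (n : ℕ) : Integrable (F n) := (hint n).mul_const _
  have hF_norm (n : ℕ) : ∫ t, ‖F n t‖ ≤ 1 / σ * (‖x‖ * N) ^ n :=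
    calc ∫ t, ‖F n t‖ = (∫ t, ‖laplaceIntegrand σ (coeff k n) t‖) * ‖x‖ ^ n := by
          simp only [F, norm_mul, norm_pow, integral_mul_const]
      _ ≤ 1 / σ * N ^ n * ‖x‖ ^ n := by gcongr; exact hnorm n
      _ = 1 / σ * (‖x‖ * N) ^ n := by ring
  have hxN : 0 ≤ ‖x‖ * N := mul_nonneg (norm_nonneg x) ((norm_nonneg L).trans hL)
  have hF_sum : Summable fun n => ∫ t, ‖F n t‖ :=
    .of_nonneg_of_le (fun _ => integral_nonneg fun _ => norm_nonneg _) hF_norm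
      ((summable_geometric_of_lt_one hxN hx).mul_left _)
  have hxL : ‖x * L‖ < 1 := by
    rw [norm_mul]
    exact (mul_le_mul_of_nonneg_left hL (norm_nonneg x)).trans_lt hx
  rw [laplaceIntegrand_PhiR]
  refine ⟨integrable_tsum_of_summable_integral_norm hF_int hF_sum, ?_⟩
  have hF_val (n : ℕ) : ∫ t, F n t = 1 / σ * (x * L) ^ n := by
    rw [integral_mul_const, hval, mul_pow]
    ring
  refine (hasSum_integral_of_summable_integral_norm hF_int hF_sum).unique ?_
  rw [funext hF_val]
  exact (hasSum_geometric_of_norm_lt_one hxL).mul_left (1 / σ)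

theorem mul_rpow_neg_lt_one {a β y : ℝ} (ha : 0 ≤ a) (hβ : 0 < β) (h : a ^ (1 / β) < y) :
    a * y ^ (-β) < 1 := by
  have hy : 0 < y := (rpow_nonneg ha _).trans_lt h
  rw [one_div, rpow_inv_lt_iff_of_pos ha hy.le hβ] at h
  calc a * y ^ (-β) < y ^ β * y ^ (-β) := by gcongr
    _ = 1 := by rw [← rpow_add hy, add_neg_cancel, rpow_zero]

theorem stmt15 (K : ℝ → ℝ) (hKc : ContinuousOn K (Set.Ioi 0))
    (M γ β : ℝ) (hM : 0 ≤ M) (hγ : 0 ≤ γ) (hβ0 : 0 < β)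
    (hKb : ∀ t : ℝ, 0 < t → |K t| ≤ M * t ^ (β - 1) * Real.exp (γ * t))
    (k : ℝ → ℝ → ℝ) (hk : ∀ t s, k t s = K (t - s)) :
    (∀ n : ℕ, ∀ σ : ℝ, γ < σ →
      MeasureTheory.IntegrableOn (fun t => Real.exp (-(σ * t)) * coeff k n t) (Set.Ioi 0) ∧
      (∫ t in Set.Ioi (0:ℝ), Real.exp (-(σ * t)) * coeff k n t) =
        (1 / σ) * (∫ t in Set.Ioi (0:ℝ), Real.exp (-(σ * t)) * K t) ^ n) ∧
    (∀ l : ℝ, 0 ≤ l → ∀ σ : ℝ, γ + (M * Real.Gamma β * l) ^ (1 / β) < σ →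
      MeasureTheory.IntegrableOn (fun t => Real.exp (-(σ * t)) * PhiR k t (-l)) (Set.Ioi 0) ∧
      (∫ t in Set.Ioi (0:ℝ), Real.exp (-(σ * t)) * PhiR k t (-l)) =
        (1 / σ) * (1 / (1 + l * ∫ t in Set.Ioi (0:ℝ), Real.exp (-(σ * t)) * K t))) := by
  have hK {σ : ℝ} (hσ : γ < σ) := integrable_laplaceIntegrand_of_abs_le hKc hβ0 hKb hσ
  refine ⟨fun n σ hσ => ?_, fun l hl σ hσ => ?_⟩
  · rw [← integrable_laplaceIntegrand_iff, ← integral_laplaceIntegrand,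
      ← integral_laplaceIntegrand]
    have hσ0 : 0 < σ := hγ.trans_lt hσ
    exact ⟨integrable_laplaceIntegrand_coeff hk (hK hσ) hσ0 n,
      integral_laplaceIntegrand_coeff hk (hK hσ) hσ0 n⟩
  have hlMΓ : 0 ≤ M * Gamma β * l := by positivity
  have hσγ : γ < σ := lt_of_le_of_lt (le_add_of_nonneg_right (rpow_nonneg hlMΓ _)) hσ
  have hσ0 : 0 < σ := hγ.trans_lt hσγ
  have hlN : ‖-l‖ * ∫ t, ‖laplaceIntegrand σ K t‖ < 1 := by
    rw [norm_neg, norm_of_nonneg hl]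
    calc l * ∫ t, ‖laplaceIntegrand σ K t‖ ≤ l * (M * Gamma β * (σ - γ) ^ (-β)) := by
          gcongr; exact integral_norm_laplaceIntegrand_le_of_abs_le hβ0 hKb hσγ
      _ = M * Gamma β * l * (σ - γ) ^ (-β) := by ring
      _ < 1 := mul_rpow_neg_lt_one hlMΓ hβ0 (lt_tsub_iff_left.2 hσ)
  obtain ⟨hint, hval⟩ := integrable_and_integral_laplaceIntegrand_PhiR
    (integrable_laplaceIntegrand_coeff hk (hK hσγ) hσ0)
    (integral_laplaceIntegrand_coeff hk (hK hσγ) hσ0)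
    (integral_norm_laplaceIntegrand_coeff_le hk (hK hσγ) hσ0)
    (norm_integral_le_integral_norm _) hlN
  rw [← integrable_laplaceIntegrand_iff, ← integral_laplaceIntegrand,
    ← integral_laplaceIntegrand, hval, neg_mul, sub_neg_eq_add, one_div (1 + _)]
  exact ⟨hint, rfl⟩
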